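/- For every x ∈ (0, π/2) and every positive integer n, 3 + (1/cos x)·Σ_{k=2}^{2n+1} (-1)^{k} C(k) x^{2k} < 2·(sin x / x) + (tan x)/x < 3 + (1/cos x)·Σ_{k=2}^{2n} (-1)^{k} C(k) x^{2k}. -/

import Mathlib

open Real Finset

/-- The coefficient `C(k) = 2·(4^k - 3k - 1)/(2k+1)!`. -/
noncomputable def wchC (k : ℕ) : ℝ :=
  2 * ((4 : ℝ) ^ k - 3 * (k : ℝ) - 1) / (Nat.factorial (2 * k + 1) : ℝ)

/-!
Since `2 sin x cos x + sin x = sin 2x + sin x`, we have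
`2 sin x / x + tan x / x = 3 + (sin 2x + sin x - 3x cos x) / (x cos x)`, and the Taylor series of
`(sin 2x + sin x - 3x cos x) / x` is `∑ (-1)^k C(k) x^(2k)`, whose terms for `k = 0, 1` vanish.
For `0 < x < 2` the moduli `C(k) x^(2k)`, `k ≥ 2`, decrease strictly because `4 C(k+1) ≤ C(k)`,
so the partial sums of this alternating series bracket its sum strictly.
-/

open Filter Topology

section AlternatingSeries

variable {E : Type*} [Ring E] [PartialOrder E] [IsOrderedRing E]
  [TopologicalSpace E] [OrderClosedTopology E] {l : E} {f : ℕ → E}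

theorem StrictAnti.alternating_series_lt_tendsto
    (hfl : Tendsto (fun n ↦ ∑ i ∈ range n, (-1) ^ i * f i) atTop (𝓝 l))
    (hfa : StrictAnti f) (k : ℕ) : ∑ i ∈ range (2 * k), (-1) ^ i * f i < l := by
  calc ∑ i ∈ range (2 * k), (-1) ^ i * f i
      < ∑ i ∈ range (2 * k), (-1) ^ i * f i + (f (2 * k) - f (2 * k + 1)) :=
        lt_add_of_pos_right _ (sub_pos.2 (hfa (Nat.lt_succ_self _)))
    _ = ∑ i ∈ range (2 * (k + 1)), (-1) ^ i * f i := by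
        rw [show 2 * (k + 1) = 2 * k + 1 + 1 by ring, sum_range_succ, sum_range_succ]
        simp [pow_succ, sub_eq_add_neg, add_assoc]
    _ ≤ l := hfa.antitone.alternating_series_le_tendsto hfl (k + 1)

theorem StrictAnti.tendsto_lt_alternating_series
    (hfl : Tendsto (fun n ↦ ∑ i ∈ range n, (-1) ^ i * f i) atTop (𝓝 l))
    (hfa : StrictAnti f) (k : ℕ) : l < ∑ i ∈ range (2 * k + 1), (-1) ^ i * f i := by
  calc l ≤ ∑ i ∈ range (2 * (k + 1) + 1), (-1) ^ i * f i :=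
        hfa.antitone.tendsto_le_alternating_series hfl (k + 1)
    _ = ∑ i ∈ range (2 * k + 1), (-1) ^ i * f i - (f (2 * k + 1) - f (2 * k + 2)) := by
        rw [show 2 * (k + 1) + 1 = 2 * k + 1 + 1 + 1 by ring, sum_range_succ, sum_range_succ]
        simp [pow_succ]
        abel
    _ < ∑ i ∈ range (2 * k + 1), (-1) ^ i * f i :=
        sub_lt_self _ (sub_pos.2 (hfa (Nat.lt_succ_self _)))

end AlternatingSeries

theorem six_mul_add_four_le_four_pow {k : ℕ} (hk : 2 ≤ k) : 6 * k + 4 ≤ 4 ^ k := by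
  induction k, hk using Nat.le_induction with
  | base => norm_num
  | succ k _ ih => rw [pow_succ]; omega

theorem wchC_pos {k : ℕ} (hk : 2 ≤ k) : 0 < wchC k := by
  have h : (6 * k + 4 : ℝ) ≤ 4 ^ k := by exact_mod_cast six_mul_add_four_le_four_pow hk
  unfold wchC
  apply div_pos _ (by positivity)
  linarith

theorem four_mul_wchC_succ_le {k : ℕ} (hk : 2 ≤ k) : 4 * wchC (k + 1) ≤ wchC k := by
  have h : (6 * k + 4 : ℝ) ≤ 4 ^ k := by exact_mod_cast six_mul_add_four_le_four_pow hk
  have hk' : (2 : ℝ) ≤ k := by exact_mod_cast hk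
  have hfact : ((2 * (k + 1) + 1).factorial : ℝ)
      = (2 * k + 2) * (2 * k + 3) * (2 * k + 1).factorial := by
    rw [show 2 * (k + 1) + 1 = 2 * k + 1 + 1 + 1 by ring, Nat.factorial_succ, Nat.factorial_succ]
    push_cast
    ring
  unfold wchC
  rw [hfact, pow_succ, ← mul_div_assoc, div_le_div_iff₀ (by positivity) (by positivity)]
  push_cast
  -- `(2k+2)(2k+3) ≥ 42` for `k ≥ 2`, and `42 (4^k - 3k - 1) ≥ 4 (4^(k+1) - 3(k+1) - 1)`
  nlinarith [mul_nonneg (by linarith : (0 : ℝ) ≤ 4 ^ k - 3 * k - 1)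
    (by nlinarith : (0 : ℝ) ≤ (2 * k + 2) * (2 * k + 3) - 42)]

theorem wchC_zero : wchC 0 = 0 := by
  norm_num [wchC]

theorem wchC_one : wchC 1 = 0 := by
  norm_num [wchC]

theorem hasSum_wchC {x : ℝ} (hx : x ≠ 0) :
    HasSum (fun k ↦ (-1 : ℝ) ^ k * wchC k * x ^ (2 * k))
      ((sin (2 * x) + sin x - 3 * x * cos x) / x) := by
  have h := ((hasSum_sin (2 * x)).add (hasSum_sin x)).sub ((hasSum_cos x).mul_left (3 * x))
  refine (h.div_const x).congr_fun fun k ↦ ?_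
  have hfact : ((2 * k + 1).factorial : ℝ) = (2 * k + 1) * (2 * k).factorial := by
    rw [Nat.factorial_succ]; push_cast; ring
  rw [wchC, hfact, mul_pow, pow_succ, pow_mul 2, show (2 : ℝ) ^ 2 = 4 by norm_num]
  field_simp
  ring

theorem tendsto_sum_range_wchC {x : ℝ} (hx : x ≠ 0) :
    Tendsto (fun n ↦ ∑ j ∈ range n, (-1 : ℝ) ^ j * (wchC (j + 2) * x ^ (2 * (j + 2)))) atTop
      (𝓝 ((sin (2 * x) + sin x - 3 * x * cos x) / x)) := by
  have h := (hasSum_nat_add_iff' 2).2 (hasSum_wchC hx)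
  simp only [sum_range_succ, sum_range_zero, wchC_zero, wchC_one, mul_zero, zero_mul,
    add_zero, sub_zero] at h
  refine h.tendsto_sum_nat.congr fun n ↦ sum_congr rfl fun j _ ↦ ?_
  ring

theorem strictAnti_wchC_mul_pow {x : ℝ} (hx : x ≠ 0) (hx2 : |x| < 2) :
    StrictAnti fun j ↦ wchC (j + 2) * x ^ (2 * (j + 2)) := by
  have hsq : x ^ 2 < 4 := by nlinarith [sq_abs x, abs_nonneg x]
  refine strictAnti_nat_of_succ_lt fun j ↦ ?_
  have hpow : 0 < x ^ (2 * (j + 2)) := Even.pow_pos (even_two_mul _) hx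
  calc wchC (j + 1 + 2) * x ^ (2 * (j + 1 + 2))
      = wchC (j + 2 + 1) * x ^ 2 * x ^ (2 * (j + 2)) := by ring
    _ < 4 * wchC (j + 2 + 1) * x ^ (2 * (j + 2)) := by
        refine mul_lt_mul_of_pos_right ?_ hpow
        rw [mul_comm 4]
        exact mul_lt_mul_of_pos_left hsq (wchC_pos (by omega))
    _ ≤ wchC (j + 2) * x ^ (2 * (j + 2)) := by
        gcongr
        exact four_mul_wchC_succ_le (by omega)

theorem sum_Icc_two_wchC (x : ℝ) (m : ℕ) :
    ∑ k ∈ Icc 2 (m + 1), (-1 : ℝ) ^ k * wchC k * x ^ (2 * k)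
      = ∑ j ∈ range m, (-1 : ℝ) ^ j * (wchC (j + 2) * x ^ (2 * (j + 2))) := by
  rw [← Ico_add_one_right_eq_Icc, sum_Ico_eq_sum_range]
  refine sum_congr (by simp) fun j _ ↦ ?_
  rw [add_comm 2 j, pow_add]
  ring

theorem two_mul_sin_div_add_tan_div_eq {x : ℝ} (hx : x ≠ 0) (hcos : cos x ≠ 0) :
    2 * (sin x / x) + tan x / x
      = 3 + 1 / cos x * ((sin (2 * x) + sin x - 3 * x * cos x) / x) := by
  rw [tan_eq_sin_div_cos, sin_two_mul]
  field_simp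
  ring

theorem two_sinx_div_x_add_tanx_div_x_bounds :
    ∀ x ∈ Set.Ioo (0 : ℝ) (π / 2), ∀ n : ℕ, 1 ≤ n →
      3 + (1 / Real.cos x) *
            (∑ k ∈ Finset.Icc 2 (2 * n + 1), (-1 : ℝ) ^ k * wchC k * x ^ (2 * k))
          < 2 * (Real.sin x / x) + Real.tan x / x ∧
      2 * (Real.sin x / x) + Real.tan x / x
          < 3 + (1 / Real.cos x) *
            (∑ k ∈ Finset.Icc 2 (2 * n), (-1 : ℝ) ^ k * wchC k * x ^ (2 * k)) := by
  rintro x ⟨hx0, hxπ⟩ n hn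
  obtain ⟨m, rfl⟩ : ∃ m, n = m + 1 := ⟨n - 1, by omega⟩
  have hcos : 0 < cos x := cos_pos_of_mem_Ioo ⟨by linarith [pi_pos], hxπ⟩
  have hx2 : |x| < 2 := by rw [abs_of_pos hx0]; linarith [pi_lt_d2]
  have hlim := tendsto_sum_range_wchC hx0.ne'
  have hanti := strictAnti_wchC_mul_pow hx0.ne' hx2
  rw [two_mul_sin_div_add_tan_div_eq hx0.ne' hcos.ne', sum_Icc_two_wchC,
    show 2 * (m + 1) = 2 * m + 1 + 1 by ring, sum_Icc_two_wchC,
    show 2 * m + 1 + 1 = 2 * (m + 1) by ring]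
  constructor <;> gcongr
  exacts [hanti.alternating_series_lt_tendsto hlim _, hanti.tendsto_lt_alternating_series hlim _]
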